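/- arXiv:2010.09417 — 8 statements merged into one kernel-verified Lean document; each statement's English description precedes it below -/
import Mathlib

section
/- Let ζ ∈ ℝ, let Λ = diag(1, −1) ∈ Matrix (Fin 2) (Fin 2) ℂ, and let Q : ℝ → Matrix (Fin 2) (Fin 2) ℂ satisfy Q(x)† = −Q(x) for all x (anti-Hermitian potential). Suppose J : ℝ → Matrix (Fin 2) (Fin 2) ℂ is differentiable and satisfies J'(x) = −iζ(Λ·J(x) − J(x)·Λ) + Q(x)·J(x) for all x. Then D(x) := J(x)† · J(x) satisfies D'(x) = −iζ(Λ·D(x) − D(x)·Λ) for all x; consequently, if J(x₀)†·J(x₀) = I for some x₀ ∈ ℝ, then J(x)†·J(x) = I for all x ∈ ℝ. -/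
/-!
Since `Q` is anti-Hermitian and `-iζ` is purely imaginary, the `Q`-terms cancel in
`(Jᴴ J)' = J'ᴴ J + Jᴴ J'`, leaving `D' = -iζ [Λ, D]`. As `Λ` is diagonal this decouples into the
scalar equations `D_ij' = -iζ (Λ_ii - Λ_jj) D_ij`, solved by exponentials; so `D(x₀) = 1` forces
`D ≡ 1`: the diagonal entries are constant and the off-diagonal ones stay zero.
-/

open Matrix Complex

theorem eq_mul_cexp_of_hasDerivAt {f : ℝ → ℂ} {c : ℂ} (hf : ∀ x, HasDerivAt f (c * f x) x)
    (x₀ x : ℝ) : f x = f x₀ * exp (c * (x - x₀)) := by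
  have hexp : ∀ s : ℝ, HasDerivAt (fun t : ℝ => exp (-c * t)) (exp (-c * s) * -c) s := fun s => by
    simpa using (((hasDerivAt_id (s : ℂ)).const_mul (-c)).comp_ofReal).cexp
  have hconst : ∀ s : ℝ, HasDerivAt (fun t => f t * exp (-c * t)) 0 s := fun s =>
    ((hf s).fun_mul (hexp s)).congr_deriv (by ring)
  have hconst_eq := is_const_of_deriv_eq_zero (fun s => (hconst s).differentiableAt)
    (fun s => (hconst s).deriv) x x₀
  calc f x = f x * exp (-c * x) * exp (c * x) := by
        rw [mul_assoc, ← exp_add]; simp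
    _ = f x₀ * exp (c * (x - x₀)) := by
        rw [hconst_eq, mul_assoc, ← exp_add]; ring_nf

theorem hasDerivAt_matrix_mul_apply {l m n : Type*} [Fintype m]
    {J : ℝ → Matrix l m ℂ} {K : ℝ → Matrix m n ℂ} {A : Matrix l m ℂ} {B : Matrix m n ℂ} {x : ℝ}
    (hJ : ∀ i j, HasDerivAt (fun s => J s i j) (A i j) x)
    (hK : ∀ i j, HasDerivAt (fun s => K s i j) (B i j) x) (i : l) (j : n) :
    HasDerivAt (fun s => (J s * K s) i j) ((A * K x + J x * B) i j) x := by
  simp only [mul_apply, Matrix.add_apply, ← Finset.sum_add_distrib]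
  exact HasDerivAt.fun_sum fun k _ => (hJ i k).fun_mul (hK k j)

theorem hasDerivAt_conjTranspose_apply {m n : Type*}
    {J : ℝ → Matrix m n ℂ} {A : Matrix m n ℂ} {x : ℝ}
    (hJ : ∀ i j, HasDerivAt (fun s => J s i j) (A i j) x) (i : n) (j : m) :
    HasDerivAt (fun s => (J s)ᴴ i j) (Aᴴ i j) x :=
  (hJ j i).star

theorem conjTranspose_mul_add_conjTranspose_mul_of_lax {R n : Type*} [CommRing R] [StarRing R]
    [Fintype n] {c : R} (hc : star c = -c) {Λ Q J : Matrix n n R}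
    (hΛ : Λ.IsHermitian) (hQ : Qᴴ = -Q) :
    (c • (Λ * J - J * Λ) + Q * J)ᴴ * J + Jᴴ * (c • (Λ * J - J * Λ) + Q * J)
      = c • (Λ * (Jᴴ * J) - Jᴴ * J * Λ) := by
  simp only [conjTranspose_add, conjTranspose_smul, conjTranspose_mul, conjTranspose_sub,
    hΛ.eq, hQ, hc, Matrix.add_mul, Matrix.mul_add, Matrix.smul_mul, Matrix.mul_smul, Matrix.sub_mul,
    Matrix.mul_sub, Matrix.neg_mul, Matrix.mul_neg, Matrix.mul_assoc]
  module

theorem diagonal_mul_sub_mul_diagonal_apply {n R : Type*} [Fintype n] [DecidableEq n] [CommRing R]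
    (d : n → R) (D : Matrix n n R) (i j : n) :
    (diagonal d * D - D * diagonal d) i j = (d i - d j) * D i j := by
  rw [Matrix.sub_apply, diagonal_mul, mul_diagonal]; ring

/-- Involution property: if `J' = -iζ[Λ,J] + QJ` with anti-Hermitian `Q` and real `ζ`,
then `D = Jᴴ J` satisfies `D' = -iζ[Λ,D]`; consequently `Jᴴ J = I` propagates. -/
theorem involution_JdaggerJ
    (ζ : ℝ) (Q J : ℝ → Matrix (Fin 2) (Fin 2) ℂ)
    (Λ : Matrix (Fin 2) (Fin 2) ℂ) (hΛ : Λ = Matrix.diagonal ![1, -1])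
    (hQ : ∀ x : ℝ, (Q x)ᴴ = -(Q x))
    (hJ : ∀ i j : Fin 2, ∀ x : ℝ,
      HasDerivAt (fun s => J s i j)
        (((-(Complex.I * (ζ : ℂ))) • (Λ * J x - J x * Λ) + Q x * J x) i j) x) :
    (∀ i j : Fin 2, ∀ x : ℝ,
      HasDerivAt (fun s => ((J s)ᴴ * J s) i j)
        (((-(Complex.I * (ζ : ℂ))) • (Λ * ((J x)ᴴ * J x) - ((J x)ᴴ * J x) * Λ)) i j) x)
    ∧ (∀ x₀ : ℝ, (J x₀)ᴴ * J x₀ = 1 → ∀ x : ℝ, (J x)ᴴ * J x = 1) := by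
  have hΛH : Λ.IsHermitian := hΛ ▸ isHermitian_diagonal_of_self_adjoint _ (by
    ext k; fin_cases k <;> simp)
  have hζ : star (-(I * ζ)) = -(-(I * ζ)) := by simp
  have hD : ∀ i j x, HasDerivAt (fun s => ((J s)ᴴ * J s) i j)
      ((-(I * ζ) • (Λ * ((J x)ᴴ * J x) - (J x)ᴴ * J x * Λ)) i j) x := fun i j x => by
    have := hasDerivAt_matrix_mul_apply (hasDerivAt_conjTranspose_apply (hJ · · x)) (hJ · · x) i j
    rwa [conjTranspose_mul_add_conjTranspose_mul_of_lax hζ hΛH (hQ x)] at this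
  refine ⟨hD, fun x₀ h₀ x => ?_⟩
  ext i j
  have hODE : ∀ s, HasDerivAt (fun t => ((J t)ᴴ * J t) i j)
      (-(I * ζ) * (![1, -1] i - ![1, -1] j) * ((J s)ᴴ * J s) i j) s := fun s =>
    (hD i j s).congr_deriv <| by
      rw [Matrix.smul_apply, hΛ, diagonal_mul_sub_mul_diagonal_apply, smul_eq_mul, mul_assoc]
  rw [eq_mul_cexp_of_hasDerivAt hODE x₀ x, h₀]
  rcases eq_or_ne i j with rfl | hij
  · simp
  · simp [one_apply_ne hij]
end

section
/- Let Φ, Ψ ∈ Matrix (Fin 2) (Fin 2) ℂ with det Φ = det Ψ = 1, and set S = Ψ⁻¹ · Φ. Let H₁ = diag(1,0) and H₂ = diag(0,1). Then det(Φ·H₁ + Ψ·H₂) = S₀₀ (the (1,1) entry of S) and det(H₁·Φ⁻¹ + H₂·Ψ⁻¹) = S₁₁ (the (2,2) entry of S). -/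
open Matrix

/-- `|P⁺| = s₁₁` and `|P⁻| = s₂₂` for `P⁺ = Φ H₁ + Ψ H₂`, `P⁻ = H₁ Φ⁻¹ + H₂ Ψ⁻¹`,
where `S = Ψ⁻¹ Φ` is the scattering matrix of unit-determinant Jost solutions. -/
theorem det_Pplus_Pminus
    (Φ Ψ : Matrix (Fin 2) (Fin 2) ℂ)
    (hΦ : Φ.det = 1) (hΨ : Ψ.det = 1)
    (S : Matrix (Fin 2) (Fin 2) ℂ) (hS : S = Ψ⁻¹ * Φ)
    (H₁ H₂ : Matrix (Fin 2) (Fin 2) ℂ)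
    (hH₁ : H₁ = Matrix.diagonal ![1, 0]) (hH₂ : H₂ = Matrix.diagonal ![0, 1]) :
    (Φ * H₁ + Ψ * H₂).det = S 0 0 ∧ (H₁ * Φ⁻¹ + H₂ * Ψ⁻¹).det = S 1 1 := by
  have hΦi : Φ⁻¹ = Φ.adjugate := by
    rw [Matrix.inv_def, hΦ]; simp
  have hΨi : Ψ⁻¹ = Ψ.adjugate := by
    rw [Matrix.inv_def, hΨ]; simp
  rw [Matrix.det_fin_two] at hΦ hΨ
  subst hS hH₁ hH₂
  rw [hΦi, hΨi]
  constructor <;>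
  · simp [Matrix.det_fin_two, Matrix.mul_apply, Matrix.adjugate_fin_two,
      Fin.sum_univ_succ, Matrix.diagonal]
    ring_nf
end

section
/- Let N ≥ 1, let ζ₁, …, ζ_N ∈ ℂ be pairwise distinct with Im ζⱼ > 0 for all j, and let v₁, …, v_N ∈ ℂ² be nonzero column vectors. Define the N×N complex matrix M by M_{jk} = (vⱼ†·v_k)/(conj(ζⱼ) − ζ_k), and assume M is invertible. Then for every ζ ∈ ℂ with ζ ∉ {ζ₁,…,ζ_N} ∪ {conj(ζ₁),…,conj(ζ_N)}, the 2×2 matrices Γ(ζ) = I + Σ_{j,k=1}^N (vⱼ·(M⁻¹)_{jk}·v_k†)/(ζ − conj(ζ_k)) and Γ̂(ζ) = I − Σ_{j,k=1}^N (vⱼ·(M⁻¹)_{jk}·v_k†)/(ζ − ζⱼ) satisfy Γ(ζ)·Γ̂(ζ) = I. -/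
open Matrix

/-!
With `V` the `2 × N` matrix whose columns are the `vⱼ`, `a = diag (z - ζ̄ₖ)⁻¹` and
`b = diag (z - ζⱼ)⁻¹`, the two matrices are `Γ = 1 + A` and `Γ̂ = 1 - B` with
`A = V (M⁻¹ a) V†` and `B = V (b M⁻¹) V†`. The Gram matrix `V†V` has entries `Mₖₗ (ζ̄ₖ - ζₗ)`,
so partial fractions give `a (V†V) b = a M - M b`. Conjugating by `M⁻¹` turns this into
`A B = A - B`, which is exactly `(1 + A) (1 - B) = 1`.
-/

namespace Matrix

variable {m n α : Type*}

theorem conjTranspose_mul_self_transpose_of_apply [Fintype m] [NonUnitalSemiring α] [StarRing α]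
    (v : n → m → α) (k l : n) :
    ((of v)ᵀᴴ * (of v)ᵀ) k l = star (v k) ⬝ᵥ v l := rfl

variable [Fintype n]

theorem sum_sum_smul_vecMulVec_star [CommSemiring α] [StarRing α] (v : n → m → α)
    (C : Matrix n n α) :
    ∑ j, ∑ k, C j k • vecMulVec (v j) (star (v k)) = (of v)ᵀ * C * (of v)ᵀᴴ := by
  ext a b
  simp only [sum_apply, smul_apply, vecMulVec_apply, mul_apply, transpose_apply, of_apply,
    conjTranspose_apply, Pi.star_apply, smul_eq_mul, Finset.sum_mul]
  rw [Finset.sum_comm]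
  exact Finset.sum_congr rfl fun k _ => Finset.sum_congr rfl fun j _ => by ring

variable [DecidableEq n]

theorem diagonal_inv_sub_mul_mul_diagonal_inv_sub [Field α] {G M : Matrix n n α}
    {w x : n → α} {z : α} (hw : ∀ k, z ≠ w k) (hx : ∀ l, z ≠ x l)
    (hG : ∀ k l, G k l = M k l * (w k - x l)) :
    diagonal (fun k => (z - w k)⁻¹) * G * diagonal (fun l => (z - x l)⁻¹)
      = diagonal (fun k => (z - w k)⁻¹) * M - M * diagonal (fun l => (z - x l)⁻¹) := by
  ext k l
  have hk : z - w k ≠ 0 := sub_ne_zero.2 (hw k)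
  have hl : z - x l ≠ 0 := sub_ne_zero.2 (hx l)
  simp only [sub_apply, diagonal_mul, mul_diagonal, hG]
  field_simp
  ring

theorem one_add_mul_one_sub_eq_one [Fintype m] [DecidableEq m] [CommRing α]
    {V : Matrix m n α} {W : Matrix n m α} {M Da Db : Matrix n n α} (hM : IsUnit M.det)
    (h : Da * (W * V) * Db = Da * M - M * Db) :
    (1 + V * (M⁻¹ * Da) * W) * (1 - V * (Db * M⁻¹) * W) = 1 := by
  have hAB : V * (M⁻¹ * Da) * W * (V * (Db * M⁻¹) * W)
      = V * (M⁻¹ * Da) * W - V * (Db * M⁻¹) * W := calc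
    _ = V * (M⁻¹ * (Da * (W * V) * Db) * M⁻¹) * W := by simp only [Matrix.mul_assoc]
    _ = V * (M⁻¹ * Da * (M * M⁻¹) - M⁻¹ * M * Db * M⁻¹) * W := by
      rw [h]; simp only [Matrix.mul_sub, Matrix.sub_mul, Matrix.mul_assoc]
    _ = _ := by
      rw [nonsing_inv_mul M hM, mul_nonsing_inv M hM, Matrix.one_mul, Matrix.mul_one,
        Matrix.mul_sub, Matrix.sub_mul]
  rw [add_mul, one_mul, mul_sub, mul_one, hAB]
  abel

end Matrix

theorem soliton_matrix_inverse_general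
    (N : ℕ)
    (ζ : Fin N → ℂ)
    (hIm : ∀ j, 0 < (ζ j).im)
    (v : Fin N → (Fin 2 → ℂ))
    (M : Matrix (Fin N) (Fin N) ℂ)
    (hM : ∀ j k, M j k = (star (v j) ⬝ᵥ v k) / ((starRingEnd ℂ) (ζ j) - ζ k))
    (hMinv : IsUnit M.det)
    (z : ℂ) (hz : ∀ k, z ≠ ζ k ∧ z ≠ (starRingEnd ℂ) (ζ k)) :
    (1 + ∑ j : Fin N, ∑ k : Fin N,
        (M⁻¹ j k / (z - (starRingEnd ℂ) (ζ k))) • Matrix.vecMulVec (v j) (star (v k)))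
      * (1 - ∑ j : Fin N, ∑ k : Fin N,
        (M⁻¹ j k / (z - ζ j)) • Matrix.vecMulVec (v j) (star (v k))) = 1 := by
  have hpoles : ∀ k l, (starRingEnd ℂ) (ζ k) ≠ ζ l := fun k l h => by
    have := congrArg Complex.im h
    rw [Complex.conj_im] at this
    linarith [hIm k, hIm l]
  have hgram : ∀ k l, ((of v)ᵀᴴ * (of v)ᵀ) k l = M k l * ((starRingEnd ℂ) (ζ k) - ζ l) :=
    fun k l => by
      rw [conjTranspose_mul_self_transpose_of_apply, hM, div_mul_cancel₀]
      exact sub_ne_zero.2 (hpoles k l)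
  have hA : ∀ j k, M⁻¹ j k / (z - (starRingEnd ℂ) (ζ k))
      = (M⁻¹ * diagonal fun k => (z - (starRingEnd ℂ) (ζ k))⁻¹) j k := fun j k => by
    rw [mul_diagonal, div_eq_mul_inv]
  have hB : ∀ j k, M⁻¹ j k / (z - ζ j) = (diagonal (fun l => (z - ζ l)⁻¹) * M⁻¹) j k :=
    fun j k => by rw [diagonal_mul, div_eq_inv_mul]
  simp only [hA, hB, sum_sum_smul_vecMulVec_star]
  exact one_add_mul_one_sub_eq_one hMinv <| diagonal_inv_sub_mul_mul_diagonal_inv_sub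
    (fun k => (hz k).2) (fun l => (hz l).1) hgram

/-- The soliton dressing matrix `Γ(ζ) = I + Σ |vⱼ⟩(M⁻¹)ⱼₖ⟨vₖ| / (ζ - ζₖ*)` with simple
zeros `ζ₁,…,ζ_N` in the upper half plane has inverse
`Γ̂(ζ) = I - Σ |vⱼ⟩(M⁻¹)ⱼₖ⟨vₖ| / (ζ - ζⱼ)`. -/
theorem soliton_matrix_inverse
    (N : ℕ) (hN : 1 ≤ N)
    (ζ : Fin N → ℂ) (hdist : Function.Injective ζ)
    (hIm : ∀ j, 0 < (ζ j).im)
    (v : Fin N → (Fin 2 → ℂ)) (hv : ∀ j, v j ≠ 0)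
    (M : Matrix (Fin N) (Fin N) ℂ)
    (hM : ∀ j k, M j k = (star (v j) ⬝ᵥ v k) / ((starRingEnd ℂ) (ζ j) - ζ k))
    (hMinv : IsUnit M.det)
    (z : ℂ) (hz : ∀ k, z ≠ ζ k ∧ z ≠ (starRingEnd ℂ) (ζ k)) :
    (1 + ∑ j : Fin N, ∑ k : Fin N,
        (M⁻¹ j k / (z - (starRingEnd ℂ) (ζ k))) • Matrix.vecMulVec (v j) (star (v k)))
      * (1 - ∑ j : Fin N, ∑ k : Fin N,
        (M⁻¹ j k / (z - ζ j)) • Matrix.vecMulVec (v j) (star (v k))) = 1 :=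
  soliton_matrix_inverse_general N ζ hIm v M hM hMinv z hz
end

section
/- Let α, γ, ξ, η ∈ ℝ with η > 0. Define A(x,t) = (32η²γξ − 32γξ³ + 4αη² − 12αξ² + 2ξ)t + x and u(x,t) = 2η · sech(2η·A(x,t)) · exp(2i·((8η⁴γ − 48η²γξ² + 8ξ⁴γ − 12αη²ξ + 4αξ³ + η² − ξ²)t − ξx)). Then u satisfies the ENLS equation at every (x,t) ∈ ℝ². -/
open Complex

/-- The extended nonlinear Schrödinger (ENLS) equation
`i u_t + (1/2) u_xx + |u|² u - iα(u_xxx + 6 u_x |u|²)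
 + γ(u_xxxx + 6 u_x² ū + 4 u |u_x|² + 8 u_xx |u|² + 2 ū_xx u² + 6 u |u|⁴) = 0`
for `u : ℝ × ℝ → ℂ`, written as `u x t`. -/
def IsENLSSolution (α γ : ℝ) (u : ℝ → ℝ → ℂ) : Prop :=
  ∀ x t : ℝ,
    Complex.I * deriv (fun s => u x s) t
    + (1 / 2 : ℂ) * iteratedDeriv 2 (fun s => u s t) x
    + (‖u x t‖ : ℂ) ^ 2 * u x t
    - Complex.I * (α : ℂ) * (iteratedDeriv 3 (fun s => u s t) x
        + 6 * deriv (fun s => u s t) x * (‖u x t‖ : ℂ) ^ 2)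
    + (γ : ℂ) * (iteratedDeriv 4 (fun s => u s t) x
        + 6 * (deriv (fun s => u s t) x) ^ 2 * (starRingEnd ℂ) (u x t)
        + 4 * u x t * (‖deriv (fun s => u s t) x‖ : ℂ) ^ 2
        + 8 * iteratedDeriv 2 (fun s => u s t) x * (‖u x t‖ : ℂ) ^ 2
        + 2 * (starRingEnd ℂ) (iteratedDeriv 2 (fun s => u s t) x) * (u x t) ^ 2
        + 6 * u x t * (‖u x t‖ : ℂ) ^ 4) = 0

/-!
Write `u = q (x + b t) · e^{2i(ω t - ξ x)}` with `q y = 2η sech (2η y)`. The ENLS equation is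
invariant under multiplication by a unimodular constant, and the `n`-th `x`-derivative of
`q · e^{κ x}` is `∑ C(n, j) κ^(n-j) q^(j) · e^{κ x}`, so at each point the equation becomes a
polynomial identity in the jet of `q`. The profile solves `q'' = 4η² q - 2 q³` with first integral
`q'² = 4η² q² - q⁴`, which expresses the whole jet through `q` and `q'`; the imaginary part of the
identity then vanishes by the choice of `b`, and the real part by the choice of `ω` together with
the first integral.
-/

open Finset

theorem HasDerivAt.mul_cexp_affine {f : ℝ → ℂ} {f' : ℂ} {x : ℝ} (hf : HasDerivAt f f' x)
    (κ c : ℂ) :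
    HasDerivAt (fun s => f s * cexp (κ * s + c)) ((f' + κ * f x) * cexp (κ * x + c)) x := by
  have he : HasDerivAt (fun s : ℝ => cexp (κ * s + c)) (cexp (κ * x + c) * (κ * 1)) x :=
    (((hasDerivAt_id x).ofReal_comp.const_mul κ).add_const c).cexp
  exact (hf.mul he).congr_deriv (by ring)

noncomputable def leibnizExp (κ : ℂ) (a : ℕ → ℂ) (n : ℕ) : ℂ :=
  ∑ j ∈ range (n + 1), (n.choose j : ℂ) * (κ ^ (n - j) * a j)

theorem leibnizExp_succ (κ : ℂ) (a : ℕ → ℂ) (n : ℕ) :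
    leibnizExp κ a (n + 1) = leibnizExp κ (fun j => a (j + 1)) n + κ * leibnizExp κ a n := by
  rw [leibnizExp, sum_choose_succ_mul (fun i j => κ ^ j * a i), add_comm, leibnizExp,
    leibnizExp, mul_sum]
  congr 1
  refine sum_congr rfl fun i hi => ?_
  rw [Nat.sub_add_comm (by simpa [Nat.lt_succ_iff] using hi), pow_succ]
  ring

theorem iteratedDeriv_mul_cexp_affine {f : ℕ → ℝ → ℂ} {n : ℕ}
    (hf : ∀ k < n, ∀ x, HasDerivAt (f k) (f (k + 1) x) x) (κ c : ℂ) :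
    iteratedDeriv n (fun s => f 0 s * cexp (κ * s + c)) =
      fun x => leibnizExp κ (fun j => f j x) n * cexp (κ * x + c) := by
  induction n with
  | zero => funext x; simp [leibnizExp]
  | succ n ih =>
    have hsum (x : ℝ) : HasDerivAt (fun s => leibnizExp κ (fun j => f j s) n)
        (leibnizExp κ (fun j => f (j + 1) x) n) x :=
      HasDerivAt.fun_sum fun j hj =>
        ((hf j (by rw [mem_range] at hj; omega) x).const_mul _).const_mul _
    rw [iteratedDeriv_succ, ih fun k hk => hf k (by omega)]
    funext x
    rw [((hsum x).mul_cexp_affine κ c).deriv, leibnizExp_succ]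

noncomputable def enlsResidual (α γ : ℝ) (u ut ux uxx uxxx uxxxx : ℂ) : ℂ :=
  I * ut + (1 / 2 : ℂ) * uxx + (‖u‖ : ℂ) ^ 2 * u
    - I * (α : ℂ) * (uxxx + 6 * ux * (‖u‖ : ℂ) ^ 2)
    + (γ : ℂ) * (uxxxx + 6 * ux ^ 2 * (starRingEnd ℂ) u + 4 * u * (‖ux‖ : ℂ) ^ 2
      + 8 * uxx * (‖u‖ : ℂ) ^ 2 + 2 * (starRingEnd ℂ) uxx * u ^ 2 + 6 * u * (‖u‖ : ℂ) ^ 4)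

theorem isENLSSolution_iff (α γ : ℝ) (u : ℝ → ℝ → ℂ) :
    IsENLSSolution α γ u ↔ ∀ x t, enlsResidual α γ (u x t) (deriv (fun s => u x s) t)
      (deriv (fun s => u s t) x) (iteratedDeriv 2 (fun s => u s t) x)
      (iteratedDeriv 3 (fun s => u s t) x) (iteratedDeriv 4 (fun s => u s t) x) = 0 :=
  Iff.rfl

theorem enlsResidual_mul_of_norm_eq_one (α γ : ℝ) {e : ℂ} (he : ‖e‖ = 1)
    (u ut ux uxx uxxx uxxxx : ℂ) :
    enlsResidual α γ (u * e) (ut * e) (ux * e) (uxx * e) (uxxx * e) (uxxxx * e) =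
      e * enlsResidual α γ u ut ux uxx uxxx uxxxx := by
  have hconj : e * (starRingEnd ℂ) e = 1 := by rw [mul_conj', he]; norm_num
  simp only [enlsResidual, norm_mul, he, mul_one, map_mul]
  linear_combination (γ : ℂ) * (6 * ux ^ 2 * (starRingEnd ℂ) u
    + 2 * (starRingEnd ℂ) uxx * u ^ 2) * e * hconj

/-- Derivatives of orders `0, …, 4` of a solution of `q'' = 4η² q - 2 q³` with value `q` and
slope `p`; the last clause is reused for all higher orders, where it means nothing. -/
def stationaryJet (η q p : ℝ) : ℕ → ℝ
  | 0 => q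
  | 1 => p
  | 2 => 4 * η ^ 2 * q - 2 * q ^ 3
  | 3 => (4 * η ^ 2 - 6 * q ^ 2) * p
  | _ => (4 * η ^ 2 - 6 * q ^ 2) * (4 * η ^ 2 * q - 2 * q ^ 3) - 12 * q * p ^ 2

theorem hasDerivAt_stationaryJet {η : ℝ} {q q' : ℝ → ℝ} (hq : ∀ y, HasDerivAt q (q' y) y)
    (hq' : ∀ y, HasDerivAt q' (4 * η ^ 2 * q y - 2 * q y ^ 3) y) :
    ∀ k < 4, ∀ y, HasDerivAt (fun y => stationaryJet η (q y) (q' y) k)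
      (stationaryJet η (q y) (q' y) (k + 1)) y := by
  intro k hk y
  interval_cases k
  · exact hq y
  · exact hq' y
  · exact (((hq y).const_mul _).sub (((hq y).fun_pow 3).const_mul 2)).congr_deriv
      (by simp only [stationaryJet]; ring)
  · exact ((((hq y).fun_pow 2).const_mul 6).const_sub _ |>.mul (hq' y)).congr_deriv
      (by simp only [stationaryJet]; ring)

def solitonSpeed (α γ ξ η : ℝ) : ℝ :=
  32 * η ^ 2 * γ * ξ - 32 * γ * ξ ^ 3 + 4 * α * η ^ 2 - 12 * α * ξ ^ 2 + 2 * ξ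

def solitonFrequency (α γ ξ η : ℝ) : ℝ :=
  8 * η ^ 4 * γ - 48 * η ^ 2 * γ * ξ ^ 2 + 8 * ξ ^ 4 * γ - 12 * α * η ^ 2 * ξ
    + 4 * α * ξ ^ 3 + η ^ 2 - ξ ^ 2

theorem enlsResidual_stationaryJet (α γ ξ η q p : ℝ)
    (hfirst : p ^ 2 = 4 * η ^ 2 * q ^ 2 - q ^ 4) :
    enlsResidual α γ q
      (solitonSpeed α γ ξ η * p + 2 * I * solitonFrequency α γ ξ η * q)
      (leibnizExp (-2 * ξ * I) (fun j => stationaryJet η q p j) 1)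
      (leibnizExp (-2 * ξ * I) (fun j => stationaryJet η q p j) 2)
      (leibnizExp (-2 * ξ * I) (fun j => stationaryJet η q p j) 3)
      (leibnizExp (-2 * ξ * I) (fun j => stationaryJet η q p j) 4) = 0 := by
  have hq4 : ((‖(q : ℂ)‖ : ℝ) : ℂ) ^ 4 = (q : ℂ) ^ 4 := by
    rw [norm_real, Real.norm_eq_abs, ← ofReal_pow, Even.pow_abs ⟨2, rfl⟩, ofReal_pow]
  rw [enlsResidual, hq4]
  simp only [← mul_conj']
  have hfirst' : (p : ℂ) ^ 2 = 4 * η ^ 2 * q ^ 2 - q ^ 4 := by exact_mod_cast hfirst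
  simp only [leibnizExp, sum_range_succ, sum_range_zero, Nat.choose, stationaryJet, solitonSpeed,
    solitonFrequency, map_add, map_mul, map_neg, map_pow, conj_ofReal, conj_I]
  push_cast
  simp only [map_zero, map_one, map_ofNat]
  linear_combination (-2 * γ * q) * hfirst'
    + ((2 * η ^ 2 + 16 * γ * η ^ 4 + I ^ 2 * (16 * γ * ξ ^ 4 + 8 * α * ξ ^ 3)) * q
      - I * (32 * γ * ξ ^ 3 + 12 * α * ξ ^ 2) * p) * I_sq

noncomputable def travelingWave (b w ξ : ℝ) (q : ℝ → ℝ) (x t : ℝ) : ℂ :=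
  (q (b * t + x) : ℂ) * cexp (2 * I * ((w * t - ξ * x : ℝ) : ℂ))

theorem norm_cexp_two_I_mul_ofReal (θ : ℝ) : ‖cexp (2 * I * (θ : ℂ))‖ = 1 := by
  rw [show 2 * I * (θ : ℂ) = ((2 * θ : ℝ) : ℂ) * I by push_cast; ring, norm_exp_ofReal_mul_I]

theorem hasDerivAt_travelingWave_time {b w ξ : ℝ} {q q' : ℝ → ℝ}
    (hq : ∀ y, HasDerivAt q (q' y) y) (x t : ℝ) :
    HasDerivAt (fun s => travelingWave b w ξ q x s)
      ((b * q' (b * t + x) + 2 * I * w * q (b * t + x))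
        * cexp (2 * I * ((w * t - ξ * x : ℝ) : ℂ))) t := by
  have harg : HasDerivAt (fun s => b * s + x) b t := by
    simpa using ((hasDerivAt_id t).const_mul b).add_const x
  have h := (((hq _).comp t harg).ofReal_comp).mul_cexp_affine (2 * I * w) (-(2 * I * ξ * x))
  convert h using 1
  · funext s
    simp only [travelingWave, Function.comp]
    congr 2
    push_cast
    ring
  · simp only [Function.comp]
    push_cast
    rw [mul_comm (b : ℂ)]
    congr 2
    ring

theorem iteratedDeriv_travelingWave_space {b w ξ η : ℝ} {q q' : ℝ → ℝ}
    (hq : ∀ y, HasDerivAt q (q' y) y)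
    (hq' : ∀ y, HasDerivAt q' (4 * η ^ 2 * q y - 2 * q y ^ 3) y) {n : ℕ} (hn : n ≤ 4) (x t : ℝ) :
    iteratedDeriv n (fun s => travelingWave b w ξ q s t) x =
      leibnizExp (-2 * ξ * I)
        (fun j => stationaryJet η (q (b * t + x)) (q' (b * t + x)) j) n
        * cexp (2 * I * ((w * t - ξ * x : ℝ) : ℂ)) := by
  have hjet : ∀ k < n, ∀ s, HasDerivAt
      (fun s => (stationaryJet η (q (b * t + s)) (q' (b * t + s)) k : ℂ))
      (stationaryJet η (q (b * t + s)) (q' (b * t + s)) (k + 1)) s := fun k hk s =>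
    ((hasDerivAt_stationaryJet hq hq' k (by omega) _).comp_const_add (b * t) s).ofReal_comp
  have hslice : (fun s => travelingWave b w ξ q s t) = fun s =>
      (stationaryJet η (q (b * t + s)) (q' (b * t + s)) 0 : ℂ)
        * cexp (-2 * ξ * I * s + 2 * I * w * t) := by
    funext s
    simp only [travelingWave, stationaryJet]
    congr 2
    push_cast
    ring
  rw [hslice, iteratedDeriv_mul_cexp_affine hjet]
  dsimp only
  congr 2
  push_cast
  ring

theorem isENLSSolution_travelingWave {α γ ξ η : ℝ} {q q' : ℝ → ℝ}
    (hq : ∀ y, HasDerivAt q (q' y) y)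
    (hq' : ∀ y, HasDerivAt q' (4 * η ^ 2 * q y - 2 * q y ^ 3) y)
    (hfirst : ∀ y, q' y ^ 2 = 4 * η ^ 2 * q y ^ 2 - q y ^ 4) :
    IsENLSSolution α γ (travelingWave (solitonSpeed α γ ξ η) (solitonFrequency α γ ξ η) ξ q) := by
  rw [isENLSSolution_iff]
  intro x t
  have hx (n : ℕ) (hn : n ≤ 4) := iteratedDeriv_travelingWave_space (b := solitonSpeed α γ ξ η)
    (w := solitonFrequency α γ ξ η) (ξ := ξ) hq hq' hn x t
  rw [(hasDerivAt_travelingWave_time hq x t).deriv, ← iteratedDeriv_one, hx 1 (by norm_num),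
    hx 2 (by norm_num), hx 3 (by norm_num), hx 4 (by norm_num), travelingWave,
    enlsResidual_mul_of_norm_eq_one α γ (norm_cexp_two_I_mul_ofReal _),
    enlsResidual_stationaryJet α γ ξ η _ _ (hfirst _), mul_zero]

noncomputable def sechProfile (η y : ℝ) : ℝ := 2 * η * (Real.cosh (2 * η * y))⁻¹

noncomputable def sechProfileDeriv (η y : ℝ) : ℝ :=
  -4 * η ^ 2 * Real.sinh (2 * η * y) / Real.cosh (2 * η * y) ^ 2

theorem hasDerivAt_sechProfile (η y : ℝ) :
    HasDerivAt (sechProfile η) (sechProfileDeriv η y) y := by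
  have hc := (((hasDerivAt_id y).const_mul (2 * η)).cosh.inv (Real.cosh_pos _).ne').const_mul
    (2 * η)
  refine hc.congr_deriv ?_
  simp only [sechProfileDeriv, id]
  field_simp
  ring

theorem hasDerivAt_sechProfileDeriv (η y : ℝ) :
    HasDerivAt (sechProfileDeriv η) (4 * η ^ 2 * sechProfile η y - 2 * sechProfile η y ^ 3) y := by
  have hin := (hasDerivAt_id y).const_mul (2 * η)
  have hc := (((hin.sinh).const_mul (-4 * η ^ 2)).div (hin.cosh.fun_pow 2)
    (pow_ne_zero 2 (Real.cosh_pos _).ne'))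
  refine hc.congr_deriv ?_
  have hpos := (Real.cosh_pos (2 * η * y)).ne'
  have hcs := Real.cosh_sq_sub_sinh_sq (2 * η * y)
  simp only [sechProfile, id, mul_one]
  generalize Real.cosh (2 * η * y) = c at *
  generalize Real.sinh (2 * η * y) = s at *
  field_simp
  linear_combination (-8 * η ^ 3 * c) * hcs

theorem sechProfileDeriv_sq (η y : ℝ) :
    sechProfileDeriv η y ^ 2 = 4 * η ^ 2 * sechProfile η y ^ 2 - sechProfile η y ^ 4 := by
  have hpos := (Real.cosh_pos (2 * η * y)).ne'
  have hcs := Real.cosh_sq_sub_sinh_sq (2 * η * y)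
  simp only [sechProfile, sechProfileDeriv]
  generalize Real.cosh (2 * η * y) = c at *
  generalize Real.sinh (2 * η * y) = s at *
  field_simp
  linear_combination (-16 * η ^ 4) * hcs

theorem single_soliton_solves_ENLS_general
    (α γ ξ η : ℝ)
    (A : ℝ → ℝ → ℝ)
    (hA : ∀ x t, A x t = (32 * η ^ 2 * γ * ξ - 32 * γ * ξ ^ 3 + 4 * α * η ^ 2
        - 12 * α * ξ ^ 2 + 2 * ξ) * t + x)
    (u : ℝ → ℝ → ℂ)
    (hu : ∀ x t, u x t = ((2 * η * (Real.cosh (2 * η * A x t))⁻¹ : ℝ) : ℂ)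
        * Complex.exp (2 * Complex.I *
          (((8 * η ^ 4 * γ - 48 * η ^ 2 * γ * ξ ^ 2 + 8 * ξ ^ 4 * γ - 12 * α * η ^ 2 * ξ
            + 4 * α * ξ ^ 3 + η ^ 2 - ξ ^ 2) * t - ξ * x : ℝ) : ℂ))) :
    IsENLSSolution α γ u := by
  have hu_wave : u = travelingWave (solitonSpeed α γ ξ η) (solitonFrequency α γ ξ η) ξ
      (sechProfile η) := by
    funext x t
    rw [hu, hA]
    rfl
  rw [hu_wave]
  exact isENLSSolution_travelingWave (hasDerivAt_sechProfile η) (hasDerivAt_sechProfileDeriv η)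
    (sechProfileDeriv_sq η)

/-- The single soliton `u = 2η sech(2ηA) e^{2i((8η⁴γ-48η²γξ²+8ξ⁴γ-12αη²ξ+4αξ³+η²-ξ²)t-ξx)}`
with `A = (32η²γξ-32γξ³+4αη²-12αξ²+2ξ)t + x` solves the ENLS equation. -/
theorem single_soliton_solves_ENLS
    (α γ ξ η : ℝ) (hη : 0 < η)
    (A : ℝ → ℝ → ℝ)
    (hA : ∀ x t, A x t = (32 * η ^ 2 * γ * ξ - 32 * γ * ξ ^ 3 + 4 * α * η ^ 2
        - 12 * α * ξ ^ 2 + 2 * ξ) * t + x)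
    (u : ℝ → ℝ → ℂ)
    (hu : ∀ x t, u x t = ((2 * η * (Real.cosh (2 * η * A x t))⁻¹ : ℝ) : ℂ)
        * Complex.exp (2 * Complex.I *
          (((8 * η ^ 4 * γ - 48 * η ^ 2 * γ * ξ ^ 2 + 8 * ξ ^ 4 * γ - 12 * α * η ^ 2 * ξ
            + 4 * α * ξ ^ 3 + η ^ 2 - ξ ^ 2) * t - ξ * x : ℝ) : ℂ))) :
    IsENLSSolution α γ u :=
  single_soliton_solves_ENLS_general α γ ξ η A hA u hu
end

section
/- Let α, γ, ξ, η, t ∈ ℝ with η > 0, let u(x,t) = 2η · sech(2η·A(x,t)) · exp(2i·((8η⁴γ − 48η²γξ² + 8ξ⁴γ − 12αη²ξ + 4αξ³ + η² − ξ²)t − ξx)) with A(x,t) = (32η²γξ − 32γξ³ + 4αη² − 12αξ² + 2ξ)t + x, and let b ∈ ℝ with 0 < b < 4η². Then the set {x ∈ ℝ : |u(x,t)|² = b} consists of exactly two points x₁ > x₂, and the width x₁ − x₂ equals (1/(4η))·log((8η² − b + 4·√(4η⁴ − bη²))/(8η² − b − 4·√(4η⁴ − bη²))); in particular the width depends only on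 η and b and is independent of α, γ, ξ and t. -/
open Complex

/-!
Since the phase factor has modulus one, `|u|² = 4η² sech²(2η(x + vt))`, so `|u|² = b` means
`cosh (2η(x + vt)) = 2η/√b > 1`, which holds exactly at `2η(x + vt) = ±arcosh (2η/√b)`.
The width is therefore `arcosh (2η/√b) / η`; writing `s = √(4η² - b)` one has
`exp (arcosh (2η/√b)) = (2η + s)/√b`, whose fourth power is the quotient
`(2η + s)² / (2η - s)²` inside the logarithm.
-/

namespace Real

theorem cosh_eq_iff {k y : ℝ} (hk : 1 ≤ k) : cosh y = k ↔ y = arcosh k ∨ y = -arcosh k := by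
  have h0 := arcosh_nonneg hk
  calc cosh y = k ↔ cosh |y| = cosh (arcosh k) := by rw [cosh_abs, cosh_arcosh hk]
    _ ↔ |y| = arcosh k := cosh_injOn.eq_iff (abs_nonneg y) h0
    _ ↔ _ := abs_eq h0

theorem sq_mul_inv_cosh_eq_iff {a b y : ℝ} (ha : 0 < a) (hb : 0 < b) :
    (a * (cosh y)⁻¹) ^ 2 = b ↔ cosh y = a / √b := by
  have hcosh : 0 < cosh y := cosh_pos y
  rw [← div_eq_mul_inv, eq_comm, ← sqrt_eq_iff_eq_sq hb.le (by positivity), eq_div_iff hcosh.ne',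
    eq_div_iff (sqrt_pos.2 hb).ne', mul_comm]

theorem four_mul_arcosh_two_mul_div_sqrt {η b : ℝ} (hη : 0 < η) (hb0 : 0 < b)
    (hb4 : b ≤ 4 * η ^ 2) :
    4 * arcosh (2 * η / √b) = log ((8 * η ^ 2 - b + 4 * √(4 * η ^ 4 - b * η ^ 2))
      / (8 * η ^ 2 - b - 4 * √(4 * η ^ 4 - b * η ^ 2))) := by
  set r := √b
  set s := √(4 * η ^ 2 - b)
  have hr : 0 < r := sqrt_pos.2 hb0
  have hr2 : r ^ 2 = b := sq_sqrt hb0.le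
  have hs2 : s ^ 2 = 4 * η ^ 2 - b := sq_sqrt (by linarith)
  have hs : s < 2 * η := by nlinarith [sqrt_nonneg (4 * η ^ 2 - b)]
  have hk : 1 ≤ 2 * η / r := by
    rw [le_div_iff₀ hr]; nlinarith [sqrt_nonneg (4 * η ^ 2 - b)]
  have hsqrt_k : √((2 * η / r) ^ 2 - 1) = s / r := by
    rw [sqrt_eq_iff_eq_sq (by nlinarith) (by positivity)]
    field_simp
    linear_combination -hs2 - hr2
  have hsqrt_N : √(4 * η ^ 4 - b * η ^ 2) = η * s := by
    rw [sqrt_eq_iff_eq_sq (by nlinarith) (by positivity)]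
    linear_combination -η ^ 2 * hs2
  have hD : 2 * η - s ≠ 0 := by linarith
  have h4 : 4 * arcosh (2 * η / r) = log (exp (arcosh (2 * η / r)) ^ 4) := by
    rw [log_pow, log_exp]; norm_num
  rw [h4, exp_arcosh hk, hsqrt_k, hsqrt_N]
  congr 1
  have hN' : 8 * η ^ 2 - b + 4 * (η * s) = (2 * η + s) ^ 2 := by linear_combination -hs2
  have hD' : 8 * η ^ 2 - b - 4 * (η * s) = (2 * η - s) ^ 2 := by linear_combination -hs2
  have hr2' : r ^ 2 = (2 * η + s) * (2 * η - s) := by linear_combination hr2 + hs2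
  rw [hN', hD', ← add_div, div_pow, show r ^ 4 = (r ^ 2) ^ 2 by ring, hr2']
  field_simp

end Real

theorem norm_ofReal_mul_exp_two_mul_I_mul (a r : ℝ) :
    ‖(a : ℂ) * exp (2 * I * r)‖ = |a| := by
  rw [norm_mul, norm_real, Real.norm_eq_abs,
    show 2 * I * r = ((2 * r : ℝ) : ℂ) * I by push_cast; ring, norm_exp_ofReal_mul_I, mul_one]

/-- The level set `{x : |u(x,t)|² = b}` of the single soliton at fixed time `t`
consists of exactly two points, whose distance (the soliton width) is
`(1/(4η)) log((8η²-b+4√(4η⁴-bη²))/(8η²-b-4√(4η⁴-bη²)))`, depending only on `η` and `b`. -/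
theorem single_soliton_width
    (α γ ξ η t : ℝ) (hη : 0 < η)
    (A : ℝ → ℝ → ℝ)
    (hA : ∀ x t, A x t = (32 * η ^ 2 * γ * ξ - 32 * γ * ξ ^ 3 + 4 * α * η ^ 2
        - 12 * α * ξ ^ 2 + 2 * ξ) * t + x)
    (u : ℝ → ℝ → ℂ)
    (hu : ∀ x t, u x t = ((2 * η * (Real.cosh (2 * η * A x t))⁻¹ : ℝ) : ℂ)
        * Complex.exp (2 * Complex.I *
          (((8 * η ^ 4 * γ - 48 * η ^ 2 * γ * ξ ^ 2 + 8 * ξ ^ 4 * γ - 12 * α * η ^ 2 * ξ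
            + 4 * α * ξ ^ 3 + η ^ 2 - ξ ^ 2) * t - ξ * x : ℝ) : ℂ)))
    (b : ℝ) (hb0 : 0 < b) (hb4 : b < 4 * η ^ 2) :
    ∃ x₁ x₂ : ℝ, x₂ < x₁
      ∧ {x : ℝ | ‖u x t‖ ^ 2 = b} = {x₁, x₂}
      ∧ x₁ - x₂ = (1 / (4 * η)) * Real.log
          ((8 * η ^ 2 - b + 4 * Real.sqrt (4 * η ^ 4 - b * η ^ 2))
            / (8 * η ^ 2 - b - 4 * Real.sqrt (4 * η ^ 4 - b * η ^ 2))) := by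
  set v := 32 * η ^ 2 * γ * ξ - 32 * γ * ξ ^ 3 + 4 * α * η ^ 2 - 12 * α * ξ ^ 2 + 2 * ξ
  set L := Real.arcosh (2 * η / √b)
  have hk : 1 < 2 * η / √b := by
    rw [one_lt_div (Real.sqrt_pos.2 hb0), Real.sqrt_lt' (by positivity)]
    linarith
  have hL : 0 < L := Real.arcosh_pos hk
  refine ⟨L / (2 * η) - v * t, -L / (2 * η) - v * t, by gcongr; linarith, ?_, ?_⟩
  · ext x
    rw [Set.mem_ofPred_eq, hu, norm_ofReal_mul_exp_two_mul_I_mul, sq_abs,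
      Real.sq_mul_inv_cosh_eq_iff (by positivity) hb0, Real.cosh_eq_iff hk.le, hA,
      Set.mem_insert_iff, Set.mem_singleton_iff, eq_sub_iff_add_eq, eq_sub_iff_add_eq,
      eq_div_iff (by positivity), eq_div_iff (by positivity), mul_comm _ (2 * η), add_comm x]
  · rw [← Real.four_mul_arcosh_two_mul_div_sqrt hη hb0 hb4.le]
    field_simp
    ring
end

section
/- Let α, γ, ξ, η ∈ ℝ with η > 0, set ζ₁ = ξ + iη ∈ ℂ, and define θ₁(x,t) = −i·ζ₁·x − (i·ζ₁² − 4i·α·ζ₁³ − 8i·γ·ζ₁⁴)·t. Then for all (x,t) ∈ ℝ²: 2i·(conj(ζ₁) − ζ₁)·exp(θ₁ − conj(θ₁)) / (exp(θ₁ + conj(θ₁)) + exp(−θ₁ − conj(θ₁))) = 2η · sech(2η·A(x,t)) · exp(2i·((8η⁴γ − 48η²γξ² + 8ξ⁴γ − 12αη²ξ + 4αξ³ + η² − ξ²)t − ξx)), where A(x,t) = (32η²γξ − 32γξ³ + 4αη² − 12αξ² + 2ξ)t + x. -/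
open Complex

/-- The `N = 1`, `c₁ = 1` case of the N-soliton formula simplifies to the explicit
hyperbolic-secant single-soliton form. -/
theorem one_soliton_formula_simplification
    (α γ ξ η : ℝ) (hη : 0 < η)
    (ζ₁ : ℂ) (hζ : ζ₁ = (ξ : ℂ) + (η : ℂ) * Complex.I)
    (θ₁ : ℝ → ℝ → ℂ)
    (hθ : ∀ x t, θ₁ x t = -Complex.I * ζ₁ * (x : ℂ)
        - (Complex.I * ζ₁ ^ 2 - 4 * Complex.I * (α : ℂ) * ζ₁ ^ 3
            - 8 * Complex.I * (γ : ℂ) * ζ₁ ^ 4) * (t : ℂ))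
    (A : ℝ → ℝ → ℝ)
    (hA : ∀ x t, A x t = (32 * η ^ 2 * γ * ξ - 32 * γ * ξ ^ 3 + 4 * α * η ^ 2
        - 12 * α * ξ ^ 2 + 2 * ξ) * t + x) :
    ∀ x t : ℝ,
      2 * Complex.I * ((starRingEnd ℂ) ζ₁ - ζ₁)
          * Complex.exp (θ₁ x t - (starRingEnd ℂ) (θ₁ x t))
          / (Complex.exp (θ₁ x t + (starRingEnd ℂ) (θ₁ x t))
              + Complex.exp (-θ₁ x t - (starRingEnd ℂ) (θ₁ x t)))
        = ((2 * η * (Real.cosh (2 * η * A x t))⁻¹ : ℝ) : ℂ)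
          * Complex.exp (2 * Complex.I *
            (((8 * η ^ 4 * γ - 48 * η ^ 2 * γ * ξ ^ 2 + 8 * ξ ^ 4 * γ - 12 * α * η ^ 2 * ξ
              + 4 * α * ξ ^ 3 + η ^ 2 - ξ ^ 2) * t - ξ * x : ℝ) : ℂ)) := by
  intro x t
  have hI3 : Complex.I ^ 3 = -Complex.I := by
    rw [pow_succ, Complex.I_sq]; ring
  have hI5 : Complex.I ^ 5 = Complex.I := by
    rw [show (5:ℕ) = 2+2+1 by rfl, pow_add, pow_add, Complex.I_sq]; ring
  set B : ℝ := (8 * η ^ 4 * γ - 48 * η ^ 2 * γ * ξ ^ 2 + 8 * ξ ^ 4 * γ - 12 * α * η ^ 2 * ξ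
              + 4 * α * ξ ^ 3 + η ^ 2 - ξ ^ 2) * t - ξ * x with hB
  set a : ℝ := η * A x t with ha
  have hθ' : θ₁ x t = (a : ℂ) + (B : ℂ) * Complex.I := by
    rw [hθ, hζ, ha, hA, hB]
    push_cast
    ring_nf
    simp only [hI5, hI3, show Complex.I ^ 4 = 1 by rw [show (4:ℕ)=2+2 by rfl, pow_add, Complex.I_sq]; ring, Complex.I_sq]
    ring
  have hconj : (starRingEnd ℂ) (θ₁ x t) = (a : ℂ) - (B : ℂ) * Complex.I := by
    rw [hθ']
    simp [map_add, map_mul, Complex.conj_ofReal, Complex.conj_I]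
    ring
  have hζconj : (starRingEnd ℂ) ζ₁ - ζ₁ = -2 * η * Complex.I := by
    rw [hζ]
    simp [map_add, map_mul, Complex.conj_ofReal, Complex.conj_I]
    ring
  have h1 : θ₁ x t - (starRingEnd ℂ) (θ₁ x t) = 2 * Complex.I * (B : ℂ) := by
    rw [hconj, hθ']; ring
  have h2 : θ₁ x t + (starRingEnd ℂ) (θ₁ x t) = ((2 * a : ℝ) : ℂ) := by
    rw [hconj, hθ']; push_cast; ring
  have h3 : -θ₁ x t - (starRingEnd ℂ) (θ₁ x t) = ((-(2 * a) : ℝ) : ℂ) := by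
    rw [hconj, hθ']; push_cast; ring
  have hca : 2 * η * A x t = 2 * a := by rw [ha]; ring
  rw [h1, h2, h3, hζconj, hca, ← Complex.ofReal_exp, ← Complex.ofReal_exp]
  have hden : ((Real.exp (2 * a) : ℂ)) + ((Real.exp (-(2 * a)) : ℂ))
      = ((2 * Real.cosh (2 * a) : ℝ) : ℂ) := by
    push_cast [Real.cosh_eq]; ring
  rw [hden]
  have hcosh : Real.cosh (2 * a) ≠ 0 := (Real.cosh_pos (2 * a)).ne'
  have hcosh' : ((2 * Real.cosh (2 * a) : ℝ) : ℂ) ≠ 0 := by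
    exact_mod_cast mul_ne_zero two_ne_zero hcosh
  rw [div_eq_iff hcosh']
  set E := Complex.exp (2 * Complex.I * (B : ℂ)) with hE
  have hr : (2 * η * (Real.cosh (2 * a))⁻¹) * (2 * Real.cosh (2 * a)) = 4 * η := by
    field_simp; ring
  have hRHS : ((2 * η * (Real.cosh (2 * a))⁻¹ : ℝ) : ℂ) * E
      * ((2 * Real.cosh (2 * a) : ℝ) : ℂ) = 4 * (η : ℂ) * E := by
    rw [show ((2 * η * (Real.cosh (2 * a))⁻¹ : ℝ) : ℂ) * E * ((2 * Real.cosh (2 * a) : ℝ) : ℂ)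
        = (((2 * η * (Real.cosh (2 * a))⁻¹) * (2 * Real.cosh (2 * a)) : ℝ) : ℂ) * E by
      push_cast; ring, hr]
    push_cast; ring
  rw [hRHS]
  linear_combination (-4 * (η : ℂ) * E) * Complex.I_sq
end

section
/- Let α, γ, η₁, θ₁₀ ∈ ℝ with η₁ > 0, and set η̄₁ = −η₁ and θ̄₁₀ = −θ₁₀. Define t₁₁(x,t) = (η̄₁ − η₁)·((64·η̄₁³·γ − 24i·η̄₁²·α + 4·η̄₁)·t − 2i·x) − 2i, t₁₂(x,t) = (η₁ − η̄₁)·((64·η₁³·γ − 24i·η₁²·α + 4·η₁)·t − 2i·x) − 2i, F(x,t) = (t₁₁(x,t) + 2i)·(t₁₂(x,t) + 2i), w(x,t) = (η₁ − η̄₁)·x + (i·(η̄₁² − η₁²) + 4α·(η̄₁³ − η₁³) + 8i·γ·(η̄₁⁴ − η₁⁴))·t − (i/2)·(θ₁₀ + θ̄₁₀), and u(x,t) = 2·(η₁ − η̄₁)·(t₁₁·exp(2η₁x + (2i·η₁² + 8α·η₁³ + 16i·γ·η₁⁴)·t + i·θ̄₁₀) + t₁₂·exp(2η̄₁x + (2i·η̄₁²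 + 8α·η̄₁³ + 16i·γ·η̄₁⁴)·t − i·θ₁₀)) / (4·cosh²(w(x,t)) + F(x,t)). Then for every fixed t ∈ ℝ, |u(x,t)| → 0 as x → +∞ and as x → −∞. -/
/-!
Since `η̄₁ = -η₁` and `θ̄₁₀ = -θ₁₀`, the phase `w` is real and affine in `x` with slope `2η₁`, so the
denominator is `(2 cosh w)² + F` where `F` is only quadratic in `x`: it is asymptotic to
`(2 cosh w)² ≍ e^{4η₁|x|}`. Each exponential in the numerator is a constant times `e^{±w}`, bounded
by `2 cosh w`, and `t₁₁`, `t₁₂` are affine in `x`, so the numerator is `O(x cosh w)`. Hence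
`u = O(x / cosh w) → 0` along the cobounded filter of `ℝ`, which is coarser than both `atTop` and `atBot`.
-/

open Complex Filter

open Asymptotics Bornology Topology

theorem tendsto_div_nhds_zero_of_isEquivalent {α 𝕜 : Type*} [NormedField 𝕜] {l : Filter α}
    {N D c p : α → 𝕜} (hp : p =o[l] c) (hN : N =O[l] (p * c)) (hD : D ~[l] (c ^ 2)) :
    Tendsto (N / D) l (𝓝 0) := by
  have hquot : (N / c ^ 2) =O[l] (p / c) := by
    refine (hN.mul (isBigO_refl (fun x => (c x ^ 2)⁻¹) l)).congr (fun x => ?_) (fun x => ?_)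
    · simp [div_eq_mul_inv]
    · rcases eq_or_ne (c x) 0 with hc | hc
      · simp [hc]
      · simp only [Pi.mul_apply, Pi.div_apply]; field_simp
  exact (IsEquivalent.refl.div hD).symm.tendsto_nhds (hquot.trans_tendsto hp.tendsto_div_nhds_zero)

theorem isBigO_const_ofReal_cobounded (a : ℂ) :
    (fun _ : ℝ => a) =O[cobounded ℝ] (fun x : ℝ => (x : ℂ)) :=
  (isLittleO_const_id_cobounded a).isBigO.trans (isBigO_of_le _ fun x => by simp)

theorem isBigO_affine_ofReal_cobounded (a b : ℂ) :
    (fun x : ℝ => a + b * x) =O[cobounded ℝ] (fun x : ℝ => (x : ℂ)) :=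
  (isBigO_const_ofReal_cobounded a).add ((isBigO_refl _ _).const_mul_left b)

theorem Real.exp_abs_le_two_mul_cosh (y : ℝ) : Real.exp |y| ≤ 2 * Real.cosh y := by
  rw [Real.cosh_eq]
  rcases abs_cases y with ⟨h, _⟩ | ⟨h, _⟩ <;> rw [h] <;> linarith [Real.exp_pos y, Real.exp_pos (-y)]

theorem Complex.norm_exp_ofReal_le_norm_two_mul_cosh (y : ℝ) : ‖cexp y‖ ≤ ‖2 * cosh y‖ := by
  rw [← ofReal_exp, ← ofReal_cosh, norm_real, norm_mul, Complex.norm_two, norm_real,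
    Real.norm_of_nonneg (Real.exp_pos y).le, Real.norm_of_nonneg (Real.cosh_pos y).le]
  exact (Real.exp_le_exp.2 (le_abs_self y)).trans (Real.exp_abs_le_two_mul_cosh y)

theorem isLittleO_ofReal_two_mul_cosh_affine {a : ℝ} (ha : a ≠ 0) (b : ℝ) :
    (fun x : ℝ => (x : ℂ)) =o[cobounded ℝ] fun x : ℝ => 2 * cosh ((a * x + b : ℝ) : ℂ) := by
  have hpoly : (fun x : ℝ => (x : ℂ)) =o[cobounded ℝ] fun x : ℝ => Real.exp (|a| * ‖x‖) := by
    have := (isLittleO_pow_exp_pos_mul_atTop 1 (abs_pos.2 ha)).comp_tendsto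
      (tendsto_norm_cobounded_atTop (E := ℝ))
    refine (isBigO_of_le (g := fun x : ℝ => ‖x‖ ^ 1) _ fun x => ?_).trans_isLittleO this
    simp
  refine hpoly.trans_isBigO (isBigO_of_le' (c := Real.exp |b|) _ fun x => ?_)
  have hcosh : ‖2 * cosh ((a * x + b : ℝ) : ℂ)‖ = 2 * Real.cosh (a * x + b) := by
    rw [← ofReal_cosh, ← ofReal_ofNat, ← ofReal_mul, norm_real, Real.norm_of_nonneg (by positivity)]
  rw [hcosh, Real.norm_of_nonneg (Real.exp_pos _).le, Real.norm_eq_abs]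
  calc Real.exp (|a| * |x|) ≤ Real.exp (|b| + |a * x + b|) := by
        rw [Real.exp_le_exp, ← abs_mul]
        have := abs_sub (a * x + b) b
        rw [add_sub_cancel_right] at this
        linarith
    _ = Real.exp |b| * Real.exp |a * x + b| := Real.exp_add _ _
    _ ≤ Real.exp |b| * (2 * Real.cosh (a * x + b)) := by
        gcongr; exact Real.exp_abs_le_two_mul_cosh _

theorem tendsto_div_two_mul_cosh_sq_add {a : ℝ} (ha : a ≠ 0) (b : ℝ) (κ₁ κ₂ : ℂ)
    {p₁ p₂ F : ℝ → ℂ} (hp₁ : p₁ =O[cobounded ℝ] (fun x : ℝ => (x : ℂ)))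
    (hp₂ : p₂ =O[cobounded ℝ] (fun x : ℝ => (x : ℂ)))
    (hF : F =O[cobounded ℝ] ((fun x : ℝ => (x : ℂ)) ^ 2)) :
    Tendsto (fun x : ℝ => (p₁ x * cexp ((a * x + b : ℝ) + κ₁) + p₂ x * cexp (-(a * x + b : ℝ) + κ₂))
      / ((2 * cosh ((a * x + b : ℝ) : ℂ)) ^ 2 + F x)) (cobounded ℝ) (𝓝 0) := by
  set c : ℝ → ℂ := fun x => 2 * cosh ((a * x + b : ℝ) : ℂ)
  have hc := isLittleO_ofReal_two_mul_cosh_affine ha b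
  have he₁ : (fun x : ℝ => cexp ((a * x + b : ℝ) + κ₁)) =O[cobounded ℝ] c :=
    isBigO_of_le' (c := ‖cexp κ₁‖) _ fun x => by
      rw [Complex.exp_add, norm_mul, mul_comm]
      gcongr
      exact norm_exp_ofReal_le_norm_two_mul_cosh _
  have he₂ : (fun x : ℝ => cexp (-(a * x + b : ℝ) + κ₂)) =O[cobounded ℝ] c :=
    isBigO_of_le' (c := ‖cexp κ₂‖) _ fun x => by
      simp only [c]
      rw [Complex.exp_add, norm_mul, mul_comm, ← cosh_neg, ← ofReal_neg]
      gcongr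
      exact norm_exp_ofReal_le_norm_two_mul_cosh _
  exact tendsto_div_nhds_zero_of_isEquivalent hc ((hp₁.mul he₁).add (hp₂.mul he₂))
    (IsEquivalent.refl.add_isLittleO (hF.trans_isLittleO (hc.pow two_pos)))

/-- The second-order fundamental soliton of the ENLS equation is spatially localized:
`|u(x,t)| → 0` as `x → ±∞` for every fixed `t`. -/
theorem second_order_soliton_localized
    (α γ η₁ θ₁₀ : ℝ) (hη : 0 < η₁)
    (ηb₁ θb₁₀ : ℝ) (hηb : ηb₁ = -η₁) (hθb : θb₁₀ = -θ₁₀)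
    (t₁₁ t₁₂ F w : ℝ → ℝ → ℂ)
    (ht₁₁ : ∀ x t, t₁₁ x t = ((ηb₁ : ℂ) - (η₁ : ℂ))
        * ((64 * (ηb₁ : ℂ) ^ 3 * (γ : ℂ) - 24 * Complex.I * (ηb₁ : ℂ) ^ 2 * (α : ℂ)
            + 4 * (ηb₁ : ℂ)) * (t : ℂ) - 2 * Complex.I * (x : ℂ)) - 2 * Complex.I)
    (ht₁₂ : ∀ x t, t₁₂ x t = ((η₁ : ℂ) - (ηb₁ : ℂ))
        * ((64 * (η₁ : ℂ) ^ 3 * (γ : ℂ) - 24 * Complex.I * (η₁ : ℂ) ^ 2 * (α : ℂ)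
            + 4 * (η₁ : ℂ)) * (t : ℂ) - 2 * Complex.I * (x : ℂ)) - 2 * Complex.I)
    (hF : ∀ x t, F x t = (t₁₁ x t + 2 * Complex.I) * (t₁₂ x t + 2 * Complex.I))
    (hw : ∀ x t, w x t = ((η₁ : ℂ) - (ηb₁ : ℂ)) * (x : ℂ)
        + (Complex.I * ((ηb₁ : ℂ) ^ 2 - (η₁ : ℂ) ^ 2)
            + 4 * (α : ℂ) * ((ηb₁ : ℂ) ^ 3 - (η₁ : ℂ) ^ 3)
            + 8 * Complex.I * (γ : ℂ) * ((ηb₁ : ℂ) ^ 4 - (η₁ : ℂ) ^ 4)) * (t : ℂ)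
        - (Complex.I / 2) * ((θ₁₀ : ℂ) + (θb₁₀ : ℂ)))
    (u : ℝ → ℝ → ℂ)
    (hu : ∀ x t, u x t = 2 * ((η₁ : ℂ) - (ηb₁ : ℂ))
        * (t₁₁ x t * Complex.exp (2 * (η₁ : ℂ) * (x : ℂ)
              + (2 * Complex.I * (η₁ : ℂ) ^ 2 + 8 * (α : ℂ) * (η₁ : ℂ) ^ 3
                  + 16 * Complex.I * (γ : ℂ) * (η₁ : ℂ) ^ 4) * (t : ℂ)
              + Complex.I * (θb₁₀ : ℂ))
          + t₁₂ x t * Complex.exp (2 * (ηb₁ : ℂ) * (x : ℂ)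
              + (2 * Complex.I * (ηb₁ : ℂ) ^ 2 + 8 * (α : ℂ) * (ηb₁ : ℂ) ^ 3
                  + 16 * Complex.I * (γ : ℂ) * (ηb₁ : ℂ) ^ 4) * (t : ℂ)
              - Complex.I * (θ₁₀ : ℂ)))
        / (4 * (Complex.cosh (w x t)) ^ 2 + F x t)) :
    ∀ t : ℝ,
      Tendsto (fun x : ℝ => ‖u x t‖) atTop (nhds 0)
      ∧ Tendsto (fun x : ℝ => ‖u x t‖) atBot (nhds 0) := by
  intro t
  subst hηb hθb
  have hw_real : ∀ x : ℝ, w x t = ((2 * η₁ * x + -(8 * α * η₁ ^ 3 * t) : ℝ) : ℂ) := fun x => by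
    rw [hw]; push_cast; ring
  have h₁₁ : (fun x => t₁₁ x t) =O[cobounded ℝ] (fun x : ℝ => (x : ℂ)) :=
    (isBigO_affine_ofReal_cobounded (t₁₁ 0 t) (t₁₁ 1 t - t₁₁ 0 t)).congr_left fun x => by
      simp only [ht₁₁]; push_cast; ring
  have h₁₂ : (fun x => t₁₂ x t) =O[cobounded ℝ] (fun x : ℝ => (x : ℂ)) :=
    (isBigO_affine_ofReal_cobounded (t₁₂ 0 t) (t₁₂ 1 t - t₁₂ 0 t)).congr_left fun x => by
      simp only [ht₁₂]; push_cast; ring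
  have hF' : (fun x => F x t) =O[cobounded ℝ] ((fun x : ℝ => (x : ℂ)) ^ 2) := by
    simp only [hF]
    exact ((h₁₁.add (isBigO_const_ofReal_cobounded _)).mul
      (h₁₂.add (isBigO_const_ofReal_cobounded _))).congr_right fun x => (sq _).symm
  have hlim : Tendsto (fun x => u x t) (cobounded ℝ) (𝓝 0) :=
    (tendsto_div_two_mul_cosh_sq_add (a := 2 * η₁) (by positivity) (-(8 * α * η₁ ^ 3 * t))
      ((2 * I * η₁ ^ 2 + 16 * α * η₁ ^ 3 + 16 * I * γ * η₁ ^ 4) * t - I * θ₁₀)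
      ((2 * I * η₁ ^ 2 - 16 * α * η₁ ^ 3 + 16 * I * γ * η₁ ^ 4) * t - I * θ₁₀)
      (h₁₁.const_mul_left (4 * η₁)) (h₁₂.const_mul_left (4 * η₁)) hF').congr fun x => by
        rw [hu, hw_real]; push_cast; ring_nf
  rw [tendsto_zero_iff_norm_tendsto_zero] at hlim
  exact ⟨hlim.mono_left IsOrderBornology.atTop_le_cobounded,
    hlim.mono_left IsOrderBornology.atBot_le_cobounded⟩
end

section
/- Let ζ ∈ ℂ, Λ = diag(1, −1) ∈ Matrix (Fin 2) (Fin 2) ℂ, let Q : ℝ → Matrix (Fin 2) (Fin 2) ℂ be continuous, and let J : ℝ → Matrix (Fin 2) (Fin 2) ℂ be continuous such that for every x ∈ ℝ the function y ↦ exp(−iζΛ(x−y))·Q(y)·J(y)·exp(iζΛ(x−y)) is integrable on (−∞, x] and J(x) = I + ∫_{−∞}^{x} exp(−iζΛ(x−y))·Q(y)·J(y)·exp(iζΛ(x−y)) dy. Then J is differentiable and J'(x) = −iζ·(Λ·J(x) − J(x)·Λ) + Q(x)·J(x) for all x ∈ ℝ. -/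
/-!
Entrywise, conjugating by `diag(e^{-iζs}, e^{iζs})` multiplies the `(i, j)` entry by `e^{αs}` with
`α = -iζ(λᵢ - λⱼ)`, `λ = (1, -1)`. Hence `J_{ij}(x) = δ_{ij} + e^{αx} ∫_{-∞}^x e^{-αy} (QJ)_{ij}(y) dy`,
and the product rule with the fundamental theorem of calculus gives
`J_{ij}' = α (J_{ij} - δ_{ij}) + (QJ)_{ij}`. Finally `α δ_{ij} = 0`, and `α J_{ij}` is the `(i, j)` entry
of `-iζ [Λ, J]`.
-/

open Matrix Complex MeasureTheory Set

theorem hasDerivAt_integral_Iic {E : Type*} [NormedAddCommGroup E] [NormedSpace ℝ E]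
    [CompleteSpace E] {G : ℝ → E} (hG : Continuous G) (hint : ∀ t, IntegrableOn G (Iic t)) (x : ℝ) :
    HasDerivAt (fun t => ∫ y in Iic t, G y) (G x) x := by
  have hsplit :
      (fun t => ∫ y in Iic t, G y) = fun t => (∫ y in Iic x, G y) + ∫ y in x..t, G y := by
    funext t
    rw [← intervalIntegral.integral_Iic_sub_Iic (hint x) (hint t), add_sub_cancel]
  rw [hsplit]
  exact (intervalIntegral.integral_hasDerivAt_right (hG.intervalIntegrable x x)
    hG.aestronglyMeasurable.stronglyMeasurableAtFilter hG.continuousAt).const_add _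

theorem hasDerivAt_integral_Iic_exp_mul (α : ℂ) {g : ℝ → ℂ} (hg : Continuous g)
    (hint : ∀ t : ℝ, IntegrableOn (fun y : ℝ => exp (α * ↑(t - y)) * g y) (Iic t)) (x : ℝ) :
    HasDerivAt (fun t : ℝ => ∫ y in Iic t, exp (α * ↑(t - y)) * g y)
      (α * (∫ y in Iic x, exp (α * ↑(x - y)) * g y) + g x) x := by
  set G : ℝ → ℂ := fun y => exp (-(α * y)) * g y
  have hfactor : ∀ t y : ℝ, exp (α * ↑(t - y)) * g y = exp (α * t) * G y := by
    intro t y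
    simp only [G, ← mul_assoc, ← Complex.exp_add]
    push_cast; ring_nf
  simp only [hfactor, integral_const_mul] at hint ⊢
  have hGint : ∀ t : ℝ, IntegrableOn G (Iic t) := fun t => by
    simpa [IntegrableOn, ← mul_assoc, ← Complex.exp_add] using (hint t).const_mul (exp (-(α * t)))
  have hexp : HasDerivAt (fun t : ℝ => exp (α * t)) (exp (α * x) * (α * 1)) x :=
    ((hasDerivAt_id x).ofReal_comp.const_mul α).cexp
  have hGc : Continuous G := (by fun_prop : Continuous fun y : ℝ => exp (-(α * y))).mul hg
  refine (hexp.mul (hasDerivAt_integral_Iic hGc hGint x)).congr_deriv ?_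
  simp only [G, ← mul_assoc, ← Complex.exp_add, add_neg_cancel, Complex.exp_zero, one_mul]
  ring

theorem sub_mul_one_apply_eq_zero {n R : Type*} [DecidableEq n] [CommRing R] (d : n → R)
    (i j : n) :
    (d i - d j) * (1 : Matrix n n R) i j = 0 := by
  rcases eq_or_ne i j with rfl | h
  · simp
  · simp [one_apply_ne h]

theorem diagonal_exp_conj_apply (ζ : ℂ) (s : ℝ) (M : Matrix (Fin 2) (Fin 2) ℂ) (i j : Fin 2) :
    (diagonal ![exp (-I * ζ * (s : ℂ)), exp (I * ζ * (s : ℂ))] * M *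
        diagonal ![exp (-I * ζ * ((-s : ℝ) : ℂ)), exp (I * ζ * ((-s : ℝ) : ℂ))]) i j
      = exp (-(I * ζ) * (![1, -1] i - ![1, -1] j) * s) * M i j := by
  rw [mul_diagonal, diagonal_mul, mul_right_comm]
  fin_cases i <;> fin_cases j <;>
    simp only [Fin.zero_eta, Fin.mk_one, cons_val_zero, cons_val_one, ← Complex.exp_add] <;>
    congr 2 <;> push_cast <;> ring

/-- A continuous solution of the Volterra integral equation
`J(x) = I + ∫_{-∞}^x e^{-iζΛ(x-y)} Q(y) J(y) e^{iζΛ(x-y)} dy`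
solves the spatial Lax equation `J_x = -iζ[Λ,J] + QJ`. -/
theorem volterra_solves_lax
    (ζ : ℂ) (Λ : Matrix (Fin 2) (Fin 2) ℂ) (hΛ : Λ = Matrix.diagonal ![1, -1])
    (eΛ : ℝ → Matrix (Fin 2) (Fin 2) ℂ)
    (heΛ : ∀ s : ℝ, eΛ s = Matrix.diagonal
        ![Complex.exp (-Complex.I * ζ * (s : ℂ)), Complex.exp (Complex.I * ζ * (s : ℂ))])
    (Q J : ℝ → Matrix (Fin 2) (Fin 2) ℂ)
    (hQcont : ∀ i j : Fin 2, Continuous fun x => Q x i j)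
    (hJcont : ∀ i j : Fin 2, Continuous fun x => J x i j)
    (hint : ∀ x : ℝ, ∀ i j : Fin 2,
      IntegrableOn (fun y => (eΛ (x - y) * Q y * J y * eΛ (-(x - y))) i j) (Set.Iic x))
    (heq : ∀ x : ℝ, ∀ i j : Fin 2,
      J x i j = (1 : Matrix (Fin 2) (Fin 2) ℂ) i j
        + ∫ y in Set.Iic x, (eΛ (x - y) * Q y * J y * eΛ (-(x - y))) i j) :
    ∀ x : ℝ, ∀ i j : Fin 2,
      HasDerivAt (fun s => J s i j)
        (((-(Complex.I * ζ)) • (Λ * J x - J x * Λ) + Q x * J x) i j) x := by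
  intro x i j
  set d : Fin 2 → ℂ := ![1, -1]
  have hentry : ∀ t y : ℝ, (eΛ (t - y) * Q y * J y * eΛ (-(t - y))) i j
      = exp (-(I * ζ) * (d i - d j) * ↑(t - y)) * (Q y * J y) i j := fun t y => by
    rw [Matrix.mul_assoc (eΛ _) (Q y) (J y), heΛ, heΛ, diagonal_exp_conj_apply]
  have hQJ : Continuous fun y => (Q y * J y) i j := by
    simp only [mul_apply, Fin.sum_univ_two]
    exact ((hQcont i 0).mul (hJcont 0 j)).add ((hQcont i 1).mul (hJcont 1 j))
  have hint' := fun t => hint t i j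
  have heq' := fun t => heq t i j
  simp only [hentry] at hint' heq'
  have hderiv := (hasDerivAt_integral_Iic_exp_mul _ hQJ hint' x).const_add
    ((1 : Matrix (Fin 2) (Fin 2) ℂ) i j)
  rw [← funext heq', eq_sub_of_add_eq' (heq' x).symm] at hderiv
  refine hderiv.congr_deriv ?_
  simp only [hΛ, Matrix.add_apply, Matrix.smul_apply, Matrix.sub_apply, diagonal_mul, mul_diagonal,
    smul_eq_mul]
  linear_combination (I * ζ) * sub_mul_one_apply_eq_zero d i j
end
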